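/- arXiv:1105.2108 — 2 statements merged into one kernel-verified Lean document; each statement's English description precedes it below -/
import Mathlib

section
/- Let (Ω, 𝓕, P) be a probability space and let f : L^∞(Ω, 𝓕, P; ℝ) → ℝ be a convex functional that is monotone, i.e., ξ ≤ η P-a.s. implies f(ξ) ≤ f(η). Then f is continuous with respect to the L^∞ norm. -/
open MeasureTheory
open scoped ENNReal

lemma Linfty_ae_le_norm {Ω : Type*} [MeasurableSpace Ω] {P : Measure Ω}
    (g : Lp ℝ ⊤ P) : ∀ᵐ ω ∂P, |g ω| ≤ ‖g‖ := by
  have h := enorm_ae_le_eLpNormEssSup (g : Ω → ℝ) P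
  have hne : eLpNormEssSup (g : Ω → ℝ) P ≠ ⊤ := by
    have := Lp.eLpNorm_ne_top g
    rwa [eLpNorm_exponent_top] at this
  have hnorm : ‖g‖ = (eLpNormEssSup (g : Ω → ℝ) P).toReal := by
    rw [Lp.norm_def, eLpNorm_exponent_top]
  filter_upwards [h] with ω hω
  rw [hnorm, ← Real.norm_eq_abs]
  have : (‖g ω‖₊ : ℝ≥0∞).toReal ≤ (eLpNormEssSup (g : Ω → ℝ) P).toReal :=
    ENNReal.toReal_mono hne hω
  simpa using this

/-- A monotone convex real-valued functional defined on all of `L^∞` of a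
probability space is continuous with respect to the `L^∞` norm. -/
theorem monotone_convex_functional_on_Linfty_continuous
    {Ω : Type*} [MeasurableSpace Ω] (P : Measure Ω) [IsProbabilityMeasure P]
    (f : Lp ℝ ⊤ P → ℝ)
    (hconv : ∀ ξ η : Lp ℝ ⊤ P, ∀ a ∈ Set.Icc (0:ℝ) 1,
      f (a • ξ + (1 - a) • η) ≤ a * f ξ + (1 - a) * f η)
    (hmono : ∀ ξ η : Lp ℝ ⊤ P, ξ ≤ η → f ξ ≤ f η) :
    Continuous f := by
  have hcvx : ConvexOn ℝ Set.univ f := by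
    refine ⟨convex_univ, fun x _ y _ a b ha hb hab => ?_⟩
    have hb' : b = 1 - a := by linarith
    subst hb'
    exact hconv x y a ⟨ha, by linarith⟩
  have key : ∀ ξ₀ : Lp ℝ ⊤ P, Filter.IsBoundedUnder (· ≤ ·) (nhds ξ₀) f := by
    intro ξ₀
    refine ⟨f (ξ₀ + Lp.const ⊤ P (1 : ℝ)), ?_⟩
    rw [Filter.eventually_map]
    filter_upwards [Metric.closedBall_mem_nhds ξ₀ one_pos] with y hy
    refine hmono _ _ ?_
    rw [← Lp.coeFn_le]
    have h1 : ∀ᵐ ω ∂P, |(y - ξ₀ : Lp ℝ ⊤ P) ω| ≤ ‖y - ξ₀‖ := Linfty_ae_le_norm _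
    have h2 : (y - ξ₀ : Lp ℝ ⊤ P) =ᵐ[P] (y : Ω → ℝ) - (ξ₀ : Ω → ℝ) := Lp.coeFn_sub y ξ₀
    have h3 : (ξ₀ + Lp.const ⊤ P (1 : ℝ) : Lp ℝ ⊤ P) =ᵐ[P]
        (ξ₀ : Ω → ℝ) + (Lp.const ⊤ P (1 : ℝ) : Ω → ℝ) := Lp.coeFn_add _ _
    have h4 : (Lp.const ⊤ P (1 : ℝ) : Ω → ℝ) =ᵐ[P] Function.const Ω (1 : ℝ) :=
      Lp.coeFn_const _ _ _
    have hn : ‖y - ξ₀‖ ≤ 1 := by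
      rw [← dist_eq_norm]; exact Metric.mem_closedBall.mp hy
    filter_upwards [h1, h2, h3, h4] with ω h1ω h2ω h3ω h4ω
    rw [h3ω, Pi.add_apply, h4ω]
    have := h1ω
    rw [h2ω, Pi.sub_apply] at this
    have := abs_le.mp (this.trans hn)
    simp only [Function.const_apply]
    linarith [this.2]
  have htfae := hcvx.continuousOn_tfae isOpen_univ Set.univ_nonempty
  have hcont : ContinuousOn f Set.univ :=
    (htfae.out 4 1).mp (fun x _ => key x)
  exact continuousOn_univ.mp hcont
end

section
/- Let (Ω, 𝓕, P) be a probability space equipped with a filtration (𝓕_t)_{t ∈ [0,T]} for some T > 0, and let (E_t)_{t∈[0,T]} be a dynamic nonlinear expectation satisfying monotonicity, time consistency, the 1-0 law, and continuity from below. Let X : [0,T] × Ω → ℝ be progressively measurable, nonnegative, with |X| ≤ C for some constant C, so that X_τ ∈ L^∞(𝓕_T) for every stopping time τ. Suppose that for every t ∈ [0,T], V_t ∈ L^∞(𝓕_t) is an essential supremum of the family {E_t(X_τ) : τ ∈ S_{t,T}}. Then V is an E-supermartingale: for all 0 ≤ s ≤ t ≤ T, E_s(V_t) ≤ V_s P-a.s.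 -/
open MeasureTheory Filter

/-- `ξ` belongs to `L^∞` of the σ-algebra `m'`: it is `m'`-measurable and
(everywhere) bounded. -/
def MemLinfty {Ω : Type*} (m' : MeasurableSpace Ω) (ξ : Ω → ℝ) : Prop :=
  Measurable[m'] ξ ∧ ∃ c : ℝ, ∀ ω, |ξ ω| ≤ c

/-- `g` is an essential supremum of the family `(f i)_{i ∈ I}` of functions:
`g` is measurable, `f i ≤ g` a.s. for every `i`, and `g ≤ h` a.s. for every
measurable `h` dominating every `f i` a.s. -/
def IsEssentialSup {Ω : Type*} [MeasurableSpace Ω] (P : Measure Ω)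
    {I : Type*} (f : I → Ω → ℝ) (g : Ω → ℝ) : Prop :=
  Measurable g ∧ (∀ i, f i ≤ᵐ[P] g) ∧
    ∀ h : Ω → ℝ, Measurable h → (∀ i, f i ≤ᵐ[P] h) → g ≤ᵐ[P] h

/-!
The rewards `E_t(X_τ)`, `τ ∈ S_{t,T}`, form an upward directed family: pasting two stopping times
along the `𝓕_t`-set where the first reward dominates gives, by the 1-0 law, a reward equal to their
maximum. Choosing stopping times whose rewards have nearly maximal integrals then produces an
increasing sequence `E_t(X_{σ_n})` converging a.s. to the essential supremum `V_t`. By continuity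
from below and time consistency, `E_s(V_t) = lim E_s(E_t(X_{σ_n})) = lim E_s(X_{σ_n}) ≤ V_s`.
-/

open Topology

theorem Directed.exists_seq_dominating {ι β : Type*} {r : β → β → Prop} {f : ι → β}
    (hf : Directed r f) (τ : ℕ → ι) :
    ∃ σ : ℕ → ι, ∀ n, r (f (τ n)) (f (σ n)) ∧ r (f (σ n)) (f (σ (n + 1))) := by
  choose u hu using hf
  let σ : ℕ → ι := fun n => Nat.rec (u (τ 0) (τ 0)) (fun k σk => u σk (τ (k + 1))) n
  refine ⟨σ, fun n => ⟨?_, (hu _ _).1⟩⟩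
  cases n with
  | zero => exact (hu _ _).1
  | succ n => exact (hu _ _).2

theorem MeasureTheory.ae_le_of_integral_max_le {α : Type*} [MeasurableSpace α] {μ : Measure α}
    {φ ψ : α → ℝ} (hφ : Integrable φ μ) (hψ : Integrable ψ μ)
    (h : ∫ a, max (φ a) (ψ a) ∂μ ≤ ∫ a, ψ a ∂μ) : φ ≤ᵐ[μ] ψ := by
  have hψ_le : ψ ≤ᵐ[μ] fun a => max (φ a) (ψ a) := ae_of_all _ fun a => le_max_right _ _
  have hmax : ψ =ᵐ[μ] fun a => max (φ a) (ψ a) :=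
    (integral_eq_iff_of_ae_le hψ (hφ.sup hψ) hψ_le).1
      (le_antisymm (integral_mono_ae hψ (hφ.sup hψ) hψ_le) h)
  filter_upwards [hmax] with a ha
  exact ha ▸ le_max_left _ _

theorem MeasureTheory.ae_le_of_directed_of_tendsto {Ω ι : Type*} [MeasurableSpace Ω]
    {P : Measure Ω} {f : ι → Ω → ℝ} (hf_int : ∀ i, Integrable (f i) P)
    (hdir : Directed (· ≤ᵐ[P] ·) f) {S : ℝ} (hS : ∀ i, ∫ ω, f i ω ∂P ≤ S) {σ : ℕ → ι}
    (hσ : ∀ᵐ ω ∂P, Monotone fun n => f (σ n) ω) {φ : Ω → ℝ} (hφ : Integrable φ P)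
    (hσφ : ∀ᵐ ω ∂P, Tendsto (fun n => f (σ n) ω) atTop (𝓝 (φ ω)))
    (hSφ : S ≤ ∫ ω, φ ω ∂P) (i : ι) : f i ≤ᵐ[P] φ := by
  refine ae_le_of_integral_max_le (hf_int i) hφ (le_trans ?_ hSφ)
  have hlim : Tendsto (fun n => ∫ ω, max (f i ω) (f (σ n) ω) ∂P) atTop
      (𝓝 (∫ ω, max (f i ω) (φ ω) ∂P)) :=
    integral_tendsto_of_tendsto_of_monotone (fun n => (hf_int i).sup (hf_int (σ n)))
      ((hf_int i).sup hφ)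
      (by filter_upwards [hσ] with ω hω using fun _ _ hmn => max_le_max le_rfl (hω hmn))
      (by filter_upwards [hσφ] with ω hω using tendsto_const_nhds.max hω)
  refine le_of_tendsto' hlim fun n => ?_
  obtain ⟨k, hik, hσk⟩ := hdir i (σ n)
  calc ∫ ω, max (f i ω) (f (σ n) ω) ∂P ≤ ∫ ω, f k ω ∂P :=
        integral_mono_ae ((hf_int i).sup (hf_int (σ n))) (hf_int k) (hik.sup_le hσk)
    _ ≤ S := hS k

namespace IsEssentialSup

variable {Ω ι : Type*} [MeasurableSpace Ω] {P : Measure Ω} {f : ι → Ω → ℝ} {g : Ω → ℝ}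

theorem exists_seq_monotone_tendsto [Nonempty ι] (hg : IsEssentialSup P f g)
    (hg_int : Integrable g P) (hf_meas : ∀ i, Measurable (f i))
    (hf_int : ∀ i, Integrable (f i) P) (hdir : Directed (· ≤ᵐ[P] ·) f) :
    ∃ σ : ℕ → ι, (∀ᵐ ω ∂P, Monotone fun n => f (σ n) ω) ∧
      ∀ᵐ ω ∂P, Tendsto (fun n => f (σ n) ω) atTop (𝓝 (g ω)) := by
  obtain ⟨-, hfg, hg_min⟩ := hg
  set S := ⨆ i, ∫ ω, f i ω ∂P
  have hS : ∀ i, ∫ ω, f i ω ∂P ≤ S := le_ciSup ⟨∫ ω, g ω ∂P, by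
    rintro _ ⟨i, rfl⟩
    exact integral_mono_ae (hf_int i) hg_int (hfg i)⟩
  choose τ hτ using fun n : ℕ =>
    exists_lt_of_lt_ciSup (sub_lt_self S (Nat.one_div_pos_of_nat : (0 : ℝ) < 1 / (n + 1)))
  obtain ⟨σ, hσ⟩ := hdir.exists_seq_dominating τ
  have hσ_mono : ∀ᵐ ω ∂P, Monotone fun n => f (σ n) ω := by
    filter_upwards [ae_all_iff.2 fun n => (hσ n).2] with ω hω using monotone_nat_of_le_succ hω
  have hσg : ∀ᵐ ω ∂P, ∀ n, f (σ n) ω ≤ g ω := ae_all_iff.2 fun n => hfg (σ n)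
  set φ : Ω → ℝ := fun ω => ⨆ n, f (σ n) ω
  have hφ_meas : Measurable φ := Measurable.iSup fun n => hf_meas (σ n)
  have hσφ : ∀ᵐ ω ∂P, Tendsto (fun n => f (σ n) ω) atTop (𝓝 (φ ω)) := by
    filter_upwards [hσ_mono, hσg] with ω hmono hle
    exact tendsto_atTop_ciSup hmono ⟨g ω, Set.forall_mem_range.2 hle⟩
  have hσ_le_φ : ∀ n, f (σ n) ≤ᵐ[P] φ := fun n => by
    filter_upwards [hσ_mono, hσφ] with ω hmono htend using hmono.ge_of_tendsto htend n
  have hφg : φ ≤ᵐ[P] g := by filter_upwards [hσg] with ω hle using ciSup_le hle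
  have hφ_int : Integrable φ P :=
    integrable_of_le_of_le hφ_meas.aestronglyMeasurable (hσ_le_φ 0) hφg (hf_int (σ 0)) hg_int
  have hSφ : S ≤ ∫ ω, φ ω ∂P := by
    have hlim : Tendsto (fun n : ℕ => S - 1 / ((n : ℝ) + 1)) atTop (𝓝 S) := by
      simpa using tendsto_const_nhds.sub (tendsto_one_div_add_atTop_nhds_zero_nat (𝕜 := ℝ))
    refine le_of_tendsto' hlim fun n => (hτ n).le.trans ?_
    calc ∫ ω, f (τ n) ω ∂P ≤ ∫ ω, f (σ n) ω ∂P := integral_mono_ae (hf_int _) (hf_int _) (hσ n).1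
      _ ≤ ∫ ω, φ ω ∂P := integral_mono_ae (hf_int _) hφ_int (hσ_le_φ n)
  have hgφ : g ≤ᵐ[P] φ :=
    hg_min φ hφ_meas (ae_le_of_directed_of_tendsto hf_int hdir hS hσ_mono hφ_int hσφ hSφ)
  refine ⟨σ, hσ_mono, ?_⟩
  filter_upwards [hσφ, hφg, hgφ] with ω htend h₁ h₂
  rwa [le_antisymm h₁ h₂] at htend

end IsEssentialSup

namespace MemLinfty

variable {Ω : Type*} {m₁ m₂ : MeasurableSpace Ω} {ξ : Ω → ℝ}

theorem mono (h : MemLinfty m₁ ξ) (hm : m₁ ≤ m₂) : MemLinfty m₂ ξ :=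
  ⟨h.1.mono hm le_rfl, h.2⟩

theorem integrable {m : MeasurableSpace Ω} {P : Measure Ω} [IsFiniteMeasure P]
    (h : MemLinfty m₁ ξ) (hm : m₁ ≤ m) : Integrable ξ P := by
  obtain ⟨hmeas, c, hc⟩ := h
  exact (integrable_const c).mono' (hmeas.mono hm le_rfl).aestronglyMeasurable
    (ae_of_all _ fun ω => (Real.norm_eq_abs _).trans_le (hc ω))

end MemLinfty

section NonlinearOperator

variable {Ω : Type*} {mΩ : MeasurableSpace Ω} {P : Measure Ω} {m' : MeasurableSpace Ω}
  {F : (Ω → ℝ) → Ω → ℝ}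

theorem ae_congr_of_monotone
    (hmono : ∀ ξ η, MemLinfty m' ξ → MemLinfty m' η → ξ ≤ᵐ[P] η → F ξ ≤ᵐ[P] F η)
    {ξ η : Ω → ℝ} (hξ : MemLinfty m' ξ) (hη : MemLinfty m' η) (h : ξ =ᵐ[P] η) :
    F ξ =ᵐ[P] F η :=
  (hmono ξ η hξ hη h.le).antisymm (hmono η ξ hη hξ h.symm.le)

theorem ae_tendsto_of_monotone_of_continuous_from_below
    (hmono : ∀ ξ η, MemLinfty m' ξ → MemLinfty m' η → ξ ≤ᵐ[P] η → F ξ ≤ᵐ[P] F η)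
    (hcb : ∀ (ξn : ℕ → Ω → ℝ) (ξ : Ω → ℝ), (∀ n, MemLinfty m' (ξn n)) → MemLinfty m' ξ →
      (∃ c : ℝ, ∀ n ω, |ξn n ω| ≤ c) → (∀ᵐ ω ∂P, Monotone fun n => ξn n ω) →
      (∀ᵐ ω ∂P, Tendsto (fun n => ξn n ω) atTop (𝓝 (ξ ω))) →
      ∀ᵐ ω ∂P, Tendsto (fun n => F (ξn n) ω) atTop (𝓝 (F ξ ω)))
    {ξn : ℕ → Ω → ℝ} {ξ : Ω → ℝ} (hξn : ∀ n, MemLinfty m' (ξn n)) (hξ : MemLinfty m' ξ)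
    (hξn_mono : ∀ᵐ ω ∂P, Monotone fun n => ξn n ω)
    (hξn_tendsto : ∀ᵐ ω ∂P, Tendsto (fun n => ξn n ω) atTop (𝓝 (ξ ω))) :
    ∀ᵐ ω ∂P, Tendsto (fun n => F (ξn n) ω) atTop (𝓝 (F ξ ω)) := by
  -- Truncating between `ξn 0` and `ξ` makes the sequence uniformly bounded without
  -- changing it outside a null set.
  obtain ⟨hξ₀_meas, c₀, hc₀⟩ := hξn 0
  obtain ⟨hξ_meas, c, hc⟩ := hξ
  set ζ : ℕ → Ω → ℝ := fun n ω => max (ξn 0 ω) (min (ξn n ω) (ξ ω))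
  have hζ_bound : ∀ n ω, |ζ n ω| ≤ max c₀ c := fun n ω =>
    abs_le.2 ⟨(neg_le_neg (le_max_left c₀ c)).trans ((abs_le.1 (hc₀ ω)).1.trans (le_max_left _ _)),
      max_le_max (le_of_abs_le (hc₀ ω)) ((min_le_right _ _).trans (le_of_abs_le (hc ω)))⟩
  have hζ_mem : ∀ n, MemLinfty m' (ζ n) := fun n =>
    ⟨hξ₀_meas.max ((hξn n).1.min hξ_meas), max c₀ c, hζ_bound n⟩
  have hζ_eq : ∀ᵐ ω ∂P, ∀ n, ζ n ω = ξn n ω := by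
    filter_upwards [hξn_mono, hξn_tendsto] with ω hmono htend n
    simp only [ζ, min_eq_left (hmono.ge_of_tendsto htend n), max_eq_right (hmono (Nat.zero_le n))]
  have hFζ : ∀ᵐ ω ∂P, ∀ n, F (ζ n) ω = F (ξn n) ω := ae_all_iff.2 fun n =>
    ae_congr_of_monotone hmono (hζ_mem n) (hξn n) (by filter_upwards [hζ_eq] with ω h using h n)
  have hζ_tendsto := hcb ζ ξ hζ_mem ⟨hξ_meas, c, hc⟩ ⟨max c₀ c, hζ_bound⟩
    (by filter_upwards [hξn_mono, hζ_eq] with ω hmono h; simpa only [h] using hmono)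
    (by filter_upwards [hξn_tendsto, hζ_eq] with ω htend h; simpa only [h] using htend)
  filter_upwards [hζ_tendsto, hFζ] with ω htend h
  simpa only [h] using htend

theorem ae_eq_piecewise_of_indicator {mt : MeasurableSpace Ω}
    (h10 : ∀ ξ, MemLinfty m' ξ → ∀ A : Set Ω, MeasurableSet[mt] A →
      A.indicator (F ξ) =ᵐ[P] F (A.indicator ξ))
    {A : Set Ω} [DecidablePred (· ∈ A)] (hA : MeasurableSet[mt] A) {ξ η : Ω → ℝ}
    (hξ : MemLinfty m' ξ) (hη : MemLinfty m' η) (hξη : MemLinfty m' (A.piecewise ξ η)) :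
    F (A.piecewise ξ η) =ᵐ[P] A.piecewise (F ξ) (F η) := by
  have hA_eq : A.indicator (F (A.piecewise ξ η)) =ᵐ[P] A.indicator (F ξ) :=
    calc A.indicator (F (A.piecewise ξ η)) =ᵐ[P] F (A.indicator (A.piecewise ξ η)) :=
          h10 _ hξη A hA
      _ = F (A.indicator ξ) := by congr 1; ext ω; by_cases hω : ω ∈ A <;> simp [hω]
      _ =ᵐ[P] A.indicator (F ξ) := (h10 ξ hξ A hA).symm
  have hAc_eq : Aᶜ.indicator (F (A.piecewise ξ η)) =ᵐ[P] Aᶜ.indicator (F η) :=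
    calc Aᶜ.indicator (F (A.piecewise ξ η)) =ᵐ[P] F (Aᶜ.indicator (A.piecewise ξ η)) :=
          h10 _ hξη Aᶜ hA.compl
      _ = F (Aᶜ.indicator η) := by congr 1; ext ω; by_cases hω : ω ∈ A <;> simp [hω]
      _ =ᵐ[P] Aᶜ.indicator (F η) := (h10 η hη Aᶜ hA.compl).symm
  filter_upwards [hA_eq, hAc_eq] with ω h₁ h₂
  by_cases hω : ω ∈ A
  · simpa [hω] using h₁
  · simpa [hω] using h₂

end NonlinearOperator

abbrev StoppingTimeIcc {Ω ι : Type*} {m : MeasurableSpace Ω} [Preorder ι] (𝓕 : Filtration ι m)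
    (t T : ι) : Type _ :=
  {τ : Ω → ι // IsStoppingTime 𝓕 (fun ω => (τ ω : WithTop ι)) ∧ ∀ ω, t ≤ τ ω ∧ τ ω ≤ T}

namespace StoppingTimeIcc

variable {Ω ι : Type*} {m : MeasurableSpace Ω} [Preorder ι] {𝓕 : Filtration ι m} {s t T : ι}

theorem nonempty (htT : t ≤ T) : Nonempty (StoppingTimeIcc 𝓕 t T) :=
  ⟨⟨fun _ => t, isStoppingTime_const 𝓕 t, fun _ => ⟨le_rfl, htT⟩⟩⟩

def inclusion (hst : s ≤ t) (τ : StoppingTimeIcc 𝓕 t T) : StoppingTimeIcc 𝓕 s T :=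
  ⟨τ.1, τ.2.1, fun ω => ⟨hst.trans (τ.2.2 ω).1, (τ.2.2 ω).2⟩⟩

def piecewise (τ₁ τ₂ : StoppingTimeIcc 𝓕 t T) {A : Set Ω} [DecidablePred (· ∈ A)]
    (hA : MeasurableSet[𝓕 t] A) : StoppingTimeIcc 𝓕 t T :=
  ⟨A.piecewise τ₁.1 τ₂.1, by
      convert τ₁.2.1.piecewise_of_le τ₂.2.1 (fun ω => WithTop.coe_le_coe.2 (τ₁.2.2 ω).1)
        (fun ω => WithTop.coe_le_coe.2 (τ₂.2.2 ω).1) hA using 1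
      ext ω; by_cases hω : ω ∈ A <;> simp [hω],
    fun ω => by by_cases hω : ω ∈ A <;> simp [hω, τ₁.2.2 ω, τ₂.2.2 ω]⟩

end StoppingTimeIcc

theorem memLinfty_stoppedValue {Ω ι : Type*} {m : MeasurableSpace Ω} [LinearOrder ι] [Nonempty ι]
    [MeasurableSpace ι] [TopologicalSpace ι] [OrderTopology ι] [SecondCountableTopology ι]
    [BorelSpace ι] [TopologicalSpace.PseudoMetrizableSpace ι] {𝓕 : Filtration ι m} {X : ι → Ω → ℝ}
    (hX : IsStronglyProgressive 𝓕 X) {C : ℝ} (hC : ∀ s ω, |X s ω| ≤ C) {τ : Ω → ι}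
    (hτ : IsStoppingTime 𝓕 (fun ω => (τ ω : WithTop ι))) {T : ι} (hτT : ∀ ω, τ ω ≤ T) :
    MemLinfty (𝓕 T) (fun ω => X (τ ω) ω) :=
  ⟨(stronglyMeasurable_stoppedValue_of_le hX hτ fun ω => WithTop.coe_le_coe.2 (hτT ω)).measurable,
    C, fun _ => hC _ _⟩

theorem directed_stoppedValue {Ω ι : Type*} {m mΩ : MeasurableSpace Ω} {P : Measure Ω} [Preorder ι]
    {𝓕 : Filtration ι m} {t T : ι} {F : (Ω → ℝ) → Ω → ℝ} {X : ι → Ω → ℝ}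
    (hX : ∀ τ : StoppingTimeIcc 𝓕 t T, MemLinfty (𝓕 T) (fun ω => X (τ.1 ω) ω))
    (hF : ∀ τ : StoppingTimeIcc 𝓕 t T, Measurable[𝓕 t] (F (fun ω => X (τ.1 ω) ω)))
    (h10 : ∀ ξ, MemLinfty (𝓕 T) ξ → ∀ A : Set Ω, MeasurableSet[𝓕 t] A →
      A.indicator (F ξ) =ᵐ[P] F (A.indicator ξ)) :
    Directed (· ≤ᵐ[P] ·) (fun τ : StoppingTimeIcc 𝓕 t T => F (fun ω => X (τ.1 ω) ω)) := by
  classical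
  intro τ₁ τ₂
  set F₁ := F (fun ω => X (τ₁.1 ω) ω)
  set F₂ := F (fun ω => X (τ₂.1 ω) ω)
  set A := {ω | F₂ ω ≤ F₁ ω}
  have hA : MeasurableSet[𝓕 t] A := measurableSet_le (hF τ₂) (hF τ₁)
  have hX_pw : (fun ω => X ((τ₁.piecewise τ₂ hA).1 ω) ω) =
      A.piecewise (fun ω => X (τ₁.1 ω) ω) (fun ω => X (τ₂.1 ω) ω) := by
    ext ω; by_cases hω : ω ∈ A <;> simp [StoppingTimeIcc.piecewise, hω]
  have hF_pw := ae_eq_piecewise_of_indicator h10 hA (hX τ₁) (hX τ₂) (hX_pw ▸ hX _)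
  rw [← hX_pw] at hF_pw
  have hmax : ∀ ω, A.piecewise F₁ F₂ ω = max (F₁ ω) (F₂ ω) := fun ω => by
    by_cases hω : ω ∈ A
    · simp [hω, max_eq_left (show F₂ ω ≤ F₁ ω from hω)]
    · simp [hω, max_eq_right (not_le.1 (show ¬F₂ ω ≤ F₁ ω from hω)).le]
  refine ⟨τ₁.piecewise τ₂ hA, ?_, ?_⟩ <;> filter_upwards [hF_pw] with ω hω <;> rw [hω, hmax]
  exacts [le_max_left _ _, le_max_right _ _]

theorem value_process_is_nonlinear_supermartingale_general
    {Ω : Type*} {m : MeasurableSpace Ω} (P : Measure Ω) [IsProbabilityMeasure P]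
    (𝓕 : Filtration ℝ m) (T : ℝ)
    (E : ℝ → (Ω → ℝ) → Ω → ℝ)
    (hErange : ∀ t ∈ Set.Icc (0:ℝ) T, ∀ ξ : Ω → ℝ,
      MemLinfty (𝓕 T) ξ → MemLinfty (𝓕 t) (E t ξ))
    (hmono : ∀ t ∈ Set.Icc (0:ℝ) T, ∀ ξ η : Ω → ℝ,
      MemLinfty (𝓕 T) ξ → MemLinfty (𝓕 T) η → ξ ≤ᵐ[P] η → E t ξ ≤ᵐ[P] E t η)
    (htc : ∀ s t : ℝ, 0 ≤ s → s ≤ t → t ≤ T → ∀ ξ : Ω → ℝ,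
      MemLinfty (𝓕 T) ξ → E s (E t ξ) =ᵐ[P] E s ξ)
    (h10 : ∀ t ∈ Set.Icc (0:ℝ) T, ∀ ξ : Ω → ℝ, MemLinfty (𝓕 T) ξ →
      ∀ A : Set Ω, MeasurableSet[𝓕 t] A →
        A.indicator (E t ξ) =ᵐ[P] E t (A.indicator ξ))
    (hcb : ∀ t ∈ Set.Icc (0:ℝ) T, ∀ (ξn : ℕ → Ω → ℝ) (ξ : Ω → ℝ),
      (∀ n, MemLinfty (𝓕 T) (ξn n)) → MemLinfty (𝓕 T) ξ →
      (∃ c : ℝ, ∀ n ω, |ξn n ω| ≤ c) →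
      (∀ᵐ ω ∂P, Monotone fun n => ξn n ω) →
      (∀ᵐ ω ∂P, Tendsto (fun n => ξn n ω) atTop (nhds (ξ ω))) →
      ∀ᵐ ω ∂P, Tendsto (fun n => E t (ξn n) ω) atTop (nhds (E t ξ ω)))
    (X : ℝ → Ω → ℝ) (hX : ProgMeasurable 𝓕 X)
    (C : ℝ) (hC : ∀ s ω, |X s ω| ≤ C)
    (V : ℝ → Ω → ℝ)
    (hVmem : ∀ t ∈ Set.Icc (0:ℝ) T, MemLinfty (𝓕 t) (V t))
    (hVess : ∀ t ∈ Set.Icc (0:ℝ) T,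
      IsEssentialSup P
        (fun τ : {τ : Ω → ℝ // IsStoppingTime 𝓕 (fun ω => (τ ω : WithTop ℝ)) ∧ ∀ ω, t ≤ τ ω ∧ τ ω ≤ T} =>
          E t (fun ω => X (τ.1 ω) ω))
        (V t)) :
    ∀ s t : ℝ, 0 ≤ s → s ≤ t → t ≤ T → E s (V t) ≤ᵐ[P] V s := by
  intro s t hs hst htT
  have htI : t ∈ Set.Icc (0:ℝ) T := ⟨hs.trans hst, htT⟩
  have hsI : s ∈ Set.Icc (0:ℝ) T := ⟨hs, hst.trans htT⟩
  have hXτ (τ : StoppingTimeIcc 𝓕 t T) : MemLinfty (𝓕 T) (fun ω => X (τ.1 ω) ω) :=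
    memLinfty_stoppedValue hX hC τ.2.1 fun ω => (τ.2.2 ω).2
  have hEXτ (τ : StoppingTimeIcc 𝓕 t T) : MemLinfty (𝓕 t) (E t (fun ω => X (τ.1 ω) ω)) :=
    hErange t htI _ (hXτ τ)
  have := StoppingTimeIcc.nonempty (𝓕 := 𝓕) htT
  obtain ⟨σ, hσ_mono, hσ_tendsto⟩ := (hVess t htI).exists_seq_monotone_tendsto
    ((hVmem t htI).integrable (𝓕.le t)) (fun τ => ((hEXτ τ).mono (𝓕.le t)).1)
    (fun τ => (hEXτ τ).integrable (𝓕.le t))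
    (directed_stoppedValue hXτ (fun τ => (hEXτ τ).1) (h10 t htI))
  have hlim := ae_tendsto_of_monotone_of_continuous_from_below (hmono s hsI) (hcb s hsI)
    (fun n => (hEXτ (σ n)).mono (𝓕.mono htT)) ((hVmem t htI).mono (𝓕.mono htT)) hσ_mono hσ_tendsto
  have hbound (n : ℕ) : E s (E t (fun ω => X ((σ n).1 ω) ω)) ≤ᵐ[P] V s :=
    (htc s t hs hst htT _ (hXτ (σ n))).le.trans
      ((hVess s hsI).2.1 (StoppingTimeIcc.inclusion hst (σ n)))
  filter_upwards [hlim, ae_all_iff.2 hbound] with ω hω hle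
  exact le_of_tendsto' hω hle

/-- Proposition 3.1: the value process of the optimal stopping problem under a
dynamic nonlinear expectation (monotone, time consistent, satisfying the 1-0
law and continuous from below) is an `E`-supermartingale. -/
theorem value_process_is_nonlinear_supermartingale
    {Ω : Type*} {m : MeasurableSpace Ω} (P : Measure Ω) [IsProbabilityMeasure P]
    (𝓕 : Filtration ℝ m) (T : ℝ) (hT : 0 < T)
    (E : ℝ → (Ω → ℝ) → Ω → ℝ)
    (hErange : ∀ t ∈ Set.Icc (0:ℝ) T, ∀ ξ : Ω → ℝ,
      MemLinfty (𝓕 T) ξ → MemLinfty (𝓕 t) (E t ξ))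
    (hmono : ∀ t ∈ Set.Icc (0:ℝ) T, ∀ ξ η : Ω → ℝ,
      MemLinfty (𝓕 T) ξ → MemLinfty (𝓕 T) η → ξ ≤ᵐ[P] η → E t ξ ≤ᵐ[P] E t η)
    (htc : ∀ s t : ℝ, 0 ≤ s → s ≤ t → t ≤ T → ∀ ξ : Ω → ℝ,
      MemLinfty (𝓕 T) ξ → E s (E t ξ) =ᵐ[P] E s ξ)
    (h10 : ∀ t ∈ Set.Icc (0:ℝ) T, ∀ ξ : Ω → ℝ, MemLinfty (𝓕 T) ξ →
      ∀ A : Set Ω, MeasurableSet[𝓕 t] A →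
        A.indicator (E t ξ) =ᵐ[P] E t (A.indicator ξ))
    (hcb : ∀ t ∈ Set.Icc (0:ℝ) T, ∀ (ξn : ℕ → Ω → ℝ) (ξ : Ω → ℝ),
      (∀ n, MemLinfty (𝓕 T) (ξn n)) → MemLinfty (𝓕 T) ξ →
      (∃ c : ℝ, ∀ n ω, |ξn n ω| ≤ c) →
      (∀ᵐ ω ∂P, Monotone fun n => ξn n ω) →
      (∀ᵐ ω ∂P, Tendsto (fun n => ξn n ω) atTop (nhds (ξ ω))) →
      ∀ᵐ ω ∂P, Tendsto (fun n => E t (ξn n) ω) atTop (nhds (E t ξ ω)))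
    (X : ℝ → Ω → ℝ) (hX : ProgMeasurable 𝓕 X)
    (hXpos : ∀ s ω, 0 ≤ X s ω) (C : ℝ) (hC : ∀ s ω, |X s ω| ≤ C)
    (V : ℝ → Ω → ℝ)
    (hVmem : ∀ t ∈ Set.Icc (0:ℝ) T, MemLinfty (𝓕 t) (V t))
    (hVess : ∀ t ∈ Set.Icc (0:ℝ) T,
      IsEssentialSup P
        (fun τ : {τ : Ω → ℝ // IsStoppingTime 𝓕 (fun ω => (τ ω : WithTop ℝ)) ∧ ∀ ω, t ≤ τ ω ∧ τ ω ≤ T} =>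
          E t (fun ω => X (τ.1 ω) ω))
        (V t)) :
    ∀ s t : ℝ, 0 ≤ s → s ≤ t → t ≤ T → E s (V t) ≤ᵐ[P] V s :=
  value_process_is_nonlinear_supermartingale_general P 𝓕 T E hErange hmono htc h10 hcb X hX C hC V
    hVmem hVess
end
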